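/- Let α ∈ (1/2, 3/2), p ∈ ℝ, and let u be twice differentiable on ℝ ∖ {p} and satisfy u''(x) = 2u(x)³ + x·u(x) − α there, with a simple pole at p of residue +1, i.e. (x − p)·u(x) → 1 as x → p. Suppose f(x) := 2u(x)² − 2u'(x) + x satisfies: f(x) → −∞ as x → −∞, f(x) → +∞ as x → +∞, and f(x) → +∞ as x → p (from both sides, as follows from the Laurent expansion of u at its residue-+1 pole). Then f has exactly one zero z in ℝ ∖ {p}, and z < p. Consequently the Bäcklund transform v(x) := −u(x) + (2α+1)/f(x) blows up precisely at the two points z < p, with (x − z)·v(x) → 1 as x → z and (x − p)·v(x) → −1 as x → p; that is, the quasi-Ablowitz–Segur solution with parameter α + 1 ∈ (3/2, 5/2) has exactly two real poles, with residues +1 and −1 in increasing order of location. -/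

import Mathlib

open Filter Topology Set

/-!
Differentiating `f = 2u² - 2u' + x` and using PII gives `f' = -2uf + (2α+1)`, so at each zero of
`f` off the pole, `f' = 2α+1 > 0`: `f` only crosses zero upwards, hence once positive it stays
positive on any interval avoiding `p`. As `f → +∞` at `p`, it has no zero to the right of `p` and
at most one to the left, where one exists by the intermediate value theorem since `f → -∞` at
`-∞`. At that simple zero `z`, `(2α+1)/f(x) ~ 1/(x - z)`; at `p` the term `(2α+1)/f` vanishes and
`-u` contributes the residue `-1`.
-/

/-- The auxiliary function `f(x) = 2 u(x)^2 - 2 u'(x) + x` appearing in the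
Bäcklund transformation for Painlevé II. -/
def piiF (u u' : ℝ → ℝ) : ℝ → ℝ := fun x => 2 * (u x) ^ 2 - 2 * u' x + x

/-- The Bäcklund transform `v(x) = -u(x) + (2α+1)/f(x)` of a solution `u`
of Painlevé II with parameter `α`. -/
noncomputable def backlund (α : ℝ) (u u' : ℝ → ℝ) : ℝ → ℝ :=
  fun x => -u x + (2 * α + 1) / piiF u u' x

section ZeroCrossing

variable {f : ℝ → ℝ} {c d : ℝ}

lemma eventually_sub_mul_pos_of_hasDerivAt (hf : HasDerivAt f d c) (hc : f c = 0) (hd : 0 < d) :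
    ∀ᶠ x in 𝓝[≠] c, 0 < (x - c) * f x := by
  filter_upwards [(hasDerivAt_iff_tendsto_slope.mp hf).eventually (eventually_gt_nhds hd),
    self_mem_nhdsWithin] with x hslope hx
  rw [slope_def_field, hc, sub_zero] at hslope
  have hxc : x - c ≠ 0 := sub_ne_zero.mpr hx
  have : (x - c) * f x = (x - c) ^ 2 * (f x / (x - c)) := by field_simp
  rw [this]
  positivity

lemma eventually_pos_nhdsGT_of_hasDerivAt (hf : HasDerivAt f d c) (hc : f c = 0) (hd : 0 < d) :
    ∀ᶠ x in 𝓝[>] c, 0 < f x := by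
  filter_upwards [nhdsGT_le_nhdsNE c (eventually_sub_mul_pos_of_hasDerivAt hf hc hd),
    self_mem_nhdsWithin] with x hpos hx
  exact pos_of_mul_pos_right hpos (sub_pos.mpr hx).le

lemma eventually_neg_nhdsLT_of_hasDerivAt (hf : HasDerivAt f d c) (hc : f c = 0) (hd : 0 < d) :
    ∀ᶠ x in 𝓝[<] c, f x < 0 := by
  filter_upwards [nhdsLT_le_nhdsNE c (eventually_sub_mul_pos_of_hasDerivAt hf hc hd),
    self_mem_nhdsWithin] with x hpos hx
  exact neg_of_mul_pos_right hpos (sub_neg.mpr hx).le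

lemma pos_of_pos_of_hasDerivAt_pos_of_eq_zero {a b : ℝ} (hab : a ≤ b)
    (hcont : ContinuousOn f (Icc a b)) (hfa : 0 < f a)
    (hzero : ∀ x ∈ Icc a b, f x = 0 → ∃ d, 0 < d ∧ HasDerivAt f d x) : 0 < f b := by
  -- real induction: `{x | 0 ≤ f x}` is closed and, by the sign lemma at zeros, open to the right
  have hnonneg : Icc a b ⊆ {x | 0 ≤ f x} := by
    refine IsClosed.Icc_subset_of_forall_mem_nhdsWithin ?_ hfa.le fun x ⟨hx0, hx⟩ => ?_
    · rw [inter_comm]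
      exact hcont.preimage_isClosed_of_isClosed isClosed_Icc isClosed_Ici
    rcases (show 0 ≤ f x from hx0).eq_or_lt with hx0 | hx0
    · obtain ⟨d, hd, hder⟩ := hzero x (Ico_subset_Icc_self hx) hx0.symm
      exact (eventually_pos_nhdsGT_of_hasDerivAt hder hx0.symm hd).mono fun _ => le_of_lt
    · exact nhdsWithin_le_of_mem (Icc_mem_nhdsGT_of_mem hx)
        (((hcont x (Ico_subset_Icc_self hx)).eventually (lt_mem_nhds hx0)).mono fun _ => le_of_lt)
  rcases hab.eq_or_lt with rfl | hlt
  · exact hfa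
  by_contra! hb
  have hfb : f b = 0 := le_antisymm hb (hnonneg ⟨hab, le_rfl⟩)
  obtain ⟨d, hd, hder⟩ := hzero b ⟨hab, le_rfl⟩ hfb
  obtain ⟨x, hfx, hx⟩ :=
    ((eventually_neg_nhdsLT_of_hasDerivAt hder hfb hd).and (Ioo_mem_nhdsLT hlt)).exists
  exact (hnonneg (Ioo_subset_Icc_self hx)).not_gt hfx

end ZeroCrossing

lemma exists_zero_lt_of_tendsto {f : ℝ → ℝ} {p : ℝ} (hcont : ContinuousOn f (Iio p))
    (hbot : Tendsto f atBot atBot) (hp : Tendsto f (𝓝[<] p) atTop) : ∃ z < p, f z = 0 := by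
  obtain ⟨a, hfa, hap⟩ := ((hbot.eventually (eventually_lt_atBot 0)).and
    (eventually_lt_atBot p)).exists
  obtain ⟨b, hfb, hab, hbp⟩ := ((hp.eventually (eventually_gt_atTop 0)).and
    (Ioo_mem_nhdsLT hap)).exists
  obtain ⟨z, hz, hfz⟩ := intermediate_value_Icc hab.le
    (hcont.mono fun x hx => hx.2.trans_lt hbp) ⟨hfa.le, hfb.le⟩
  exact ⟨z, hz.2.trans_lt hbp, hfz⟩

section AffineDerivative

variable {f g : ℝ → ℝ} {c p : ℝ}

lemma hasDerivAt_of_affine_of_eq_zero {x : ℝ} (hf : HasDerivAt f (g x * f x + c) x)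
    (hx : f x = 0) : HasDerivAt f c x := by
  simpa [hx] using hf

lemma pos_of_eventually_pos_of_affine (hf : ∀ x ≠ p, HasDerivAt f (g x * f x + c) x)
    (hc : 0 < c) {a b : ℝ} (ha : ∀ᶠ x in 𝓝[>] a, 0 < f x) (hab : a < b) (hp : p ∉ Ioc a b) :
    0 < f b := by
  obtain ⟨x, hfx, hx⟩ := (ha.and (Ioo_mem_nhdsGT hab)).exists
  have hne : ∀ y ∈ Icc x b, y ≠ p := fun y hy hyp => hp (hyp ▸ ⟨hx.1.trans_le hy.1, hy.2⟩)
  exact pos_of_pos_of_hasDerivAt_pos_of_eq_zero hx.2.le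
    (fun y hy => (hf y (hne y hy)).continuousAt.continuousWithinAt) hfx
    fun y hy hy0 => ⟨c, hc, hasDerivAt_of_affine_of_eq_zero (hf y (hne y hy)) hy0⟩

lemma eq_of_eq_zero_of_affine (hf : ∀ x ≠ p, HasDerivAt f (g x * f x + c) x) (hc : 0 < c)
    (hp : ∀ᶠ x in 𝓝[>] p, 0 < f x) {z : ℝ} (hzp : z < p) (hz : f z = 0) {w : ℝ} (hwp : w ≠ p)
    (hw : f w = 0) : w = z := by
  have hpos_of_zero : ∀ a b, a < b → b < p → f a = 0 → 0 < f b := fun a b hab hbp ha =>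
    pos_of_eventually_pos_of_affine hf hc (eventually_pos_nhdsGT_of_hasDerivAt
      (hasDerivAt_of_affine_of_eq_zero (hf a (hab.trans hbp).ne) ha) ha hc) hab
      fun h => h.2.not_gt hbp
  rcases hwp.lt_or_gt with hwp | hpw
  · rcases lt_trichotomy w z with h | h | h
    · exact absurd hz (hpos_of_zero w z h hzp hw).ne'
    · exact h
    · exact absurd hw (hpos_of_zero z w h hwp hz).ne'
  · exact absurd hw (pos_of_eventually_pos_of_affine hf hc hp hpw fun h => h.1.false).ne'

end AffineDerivative

lemma tendsto_sub_mul_nhdsNE_of_continuousAt {u : ℝ → ℝ} {z : ℝ} (hu : ContinuousAt u z) :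
    Tendsto (fun x => (x - z) * u x) (𝓝[≠] z) (𝓝 0) := by
  have : Tendsto (fun x => (x - z) * u x) (𝓝 z) (𝓝 ((z - z) * u z)) :=
    (continuousAt_id.sub continuousAt_const).mul hu
  simpa using this.mono_left nhdsWithin_le_nhds

lemma tendsto_sub_mul_div_of_hasDerivAt {f : ℝ → ℝ} {z d : ℝ} (hf : HasDerivAt f d z)
    (hz : f z = 0) (hd : d ≠ 0) (k : ℝ) :
    Tendsto (fun x => (x - z) * (k / f x)) (𝓝[≠] z) (𝓝 (k / d)) := by
  refine (((hasDerivAt_iff_tendsto_slope.mp hf).inv₀ hd).const_mul k).congr fun x => ?_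
  rw [slope_def_field, hz, sub_zero, inv_div]
  ring

lemma tendsto_sub_mul_div_of_tendsto_atTop {f : ℝ → ℝ} {p : ℝ} (hf : Tendsto f (𝓝[≠] p) atTop)
    (k : ℝ) : Tendsto (fun x => (x - p) * (k / f x)) (𝓝[≠] p) (𝓝 0) := by
  have hsub : Tendsto (fun x : ℝ => x - p) (𝓝[≠] p) (𝓝 0) :=
    tendsto_sub_nhds_zero_iff.mpr nhdsWithin_le_nhds
  simpa [div_eq_mul_inv] using hsub.mul (hf.inv_tendsto_atTop.const_mul k)

lemma hasDerivAt_piiF {α x : ℝ} {u u' u'' : ℝ → ℝ} (hu : HasDerivAt u (u' x) x)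
    (hu' : HasDerivAt u' (u'' x) x) (hPII : u'' x = 2 * u x ^ 3 + x * u x - α) :
    HasDerivAt (piiF u u') (-2 * u x * piiF u u' x + (2 * α + 1)) x := by
  refine ((((hu.fun_pow 2).const_mul 2).fun_sub (hu'.const_mul 2)).fun_add
    (hasDerivAt_id' x)).congr_deriv ?_
  simp only [piiF, hPII, Nat.cast_ofNat, Nat.add_one_sub_one, pow_one]
  ring

lemma tendsto_sub_mul_backlund {α z r s : ℝ} {u u' : ℝ → ℝ}
    (hu : Tendsto (fun x => (x - z) * u x) (𝓝[≠] z) (𝓝 r))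
    (hf : Tendsto (fun x => (x - z) * ((2 * α + 1) / piiF u u' x)) (𝓝[≠] z) (𝓝 s)) :
    Tendsto (fun x => (x - z) * backlund α u u' x) (𝓝[≠] z) (𝓝 (-r + s)) :=
  (hu.neg.add hf).congr fun x => by simp only [backlund]; ring

theorem qAS_two_poles_general (α : ℝ) (hα : α ∈ Set.Ioo ((1:ℝ)/2) (3/2)) (p : ℝ)
    (u u' u'' : ℝ → ℝ)
    (hu : ∀ x ≠ p, HasDerivAt u (u' x) x)
    (hu' : ∀ x ≠ p, HasDerivAt u' (u'' x) x)
    (hPII : ∀ x ≠ p, u'' x = 2 * (u x) ^ 3 + x * u x - α)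
    (hpole : Tendsto (fun x => (x - p) * u x) (𝓝[≠] p) (𝓝 1))
    (hfbot : Tendsto (piiF u u') atBot atBot)
    (hfp : Tendsto (piiF u u') (𝓝[≠] p) atTop) :
    ∃ z : ℝ, z < p ∧ piiF u u' z = 0 ∧
      (∀ w, w ≠ p → piiF u u' w = 0 → w = z) ∧
      ContinuousOn (backlund α u u') {x | x ≠ z ∧ x ≠ p} ∧
      Tendsto (fun x => (x - z) * backlund α u u' x) (𝓝[≠] z) (𝓝 1) ∧
      Tendsto (fun x => (x - p) * backlund α u u' x) (𝓝[≠] p) (𝓝 (-1)) := by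
  have hc : (0 : ℝ) < 2 * α + 1 := by linarith [hα.1]
  have hf : ∀ x ≠ p, HasDerivAt (piiF u u') (-2 * u x * piiF u u' x + (2 * α + 1)) x :=
    fun x hx => hasDerivAt_piiF (hu x hx) (hu' x hx) (hPII x hx)
  obtain ⟨z, hzp, hfz⟩ := exists_zero_lt_of_tendsto
    (fun x hx => (hf x (ne_of_lt hx)).continuousAt.continuousWithinAt) hfbot
    (hfp.mono_left (nhdsLT_le_nhdsNE p))
  have huniq : ∀ w, w ≠ p → piiF u u' w = 0 → w = z := fun w =>
    eq_of_eq_zero_of_affine hf hc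
      ((hfp.mono_left (nhdsGT_le_nhdsNE p)).eventually (eventually_gt_atTop 0)) hzp hfz
  refine ⟨z, hzp, hfz, huniq, fun x ⟨hxz, hxp⟩ => ?_, ?_, ?_⟩
  · exact ((hu x hxp).continuousAt.neg.add (continuousAt_const.div (hf x hxp).continuousAt
      fun h => hxz (huniq x hxp h))).continuousWithinAt
  · simpa [div_self hc.ne'] using tendsto_sub_mul_backlund
      (tendsto_sub_mul_nhdsNE_of_continuousAt (hu z hzp.ne).continuousAt)
      (tendsto_sub_mul_div_of_hasDerivAt
        (hasDerivAt_of_affine_of_eq_zero (g := fun x => -2 * u x) (hf z hzp.ne) hfz)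
        hfz hc.ne' (2 * α + 1))
  · simpa using tendsto_sub_mul_backlund hpole (tendsto_sub_mul_div_of_tendsto_atTop hfp _)

/-- Proposition 3.2: let `α ∈ (1/2, 3/2)` and let `u` solve
Painlevé II with parameter `α` on `ℝ ∖ {p}` with a simple pole of residue
`+1` at `p`.  If `f = 2 u^2 - 2 u' + x` tends to `-∞` at `-∞`, to `+∞` at
`+∞`, and to `+∞` at `p`, then `f` has exactly one zero `z` in `ℝ ∖ {p}`,
with `z < p`, and the Bäcklund transform `v = -u + (2α+1)/f` (the
quasi-Ablowitz–Segur solution with parameter `α + 1`) blows up precisely at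
the two points `z < p`, with residues `+1` at `z` and `-1` at `p`. -/
theorem qAS_two_poles (α : ℝ) (hα : α ∈ Set.Ioo ((1:ℝ)/2) (3/2)) (p : ℝ)
    (u u' u'' : ℝ → ℝ)
    (hu : ∀ x ≠ p, HasDerivAt u (u' x) x)
    (hu' : ∀ x ≠ p, HasDerivAt u' (u'' x) x)
    (hPII : ∀ x ≠ p, u'' x = 2 * (u x) ^ 3 + x * u x - α)
    (hpole : Tendsto (fun x => (x - p) * u x) (𝓝[≠] p) (𝓝 1))
    (hfbot : Tendsto (piiF u u') atBot atBot)
    (hftop : Tendsto (piiF u u') atTop atTop)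
    (hfp : Tendsto (piiF u u') (𝓝[≠] p) atTop) :
    ∃ z : ℝ, z < p ∧ piiF u u' z = 0 ∧
      (∀ w, w ≠ p → piiF u u' w = 0 → w = z) ∧
      ContinuousOn (backlund α u u') {x | x ≠ z ∧ x ≠ p} ∧
      Tendsto (fun x => (x - z) * backlund α u u' x) (𝓝[≠] z) (𝓝 1) ∧
      Tendsto (fun x => (x - p) * backlund α u u' x) (𝓝[≠] p) (𝓝 (-1)) :=
  qAS_two_poles_general α hα p u u' u'' hu hu' hPII hpole hfbot hfp
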